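/- arXiv:2312.12843 — 2 statements merged into one kernel-verified Lean document; each statement's English description precedes it below -/
import Mathlib

section
/- Let Γ1 be a balanced signed graph on n1 vertices with adjacency matrix A1 and marking μ1. Then A1 and A_{1μ} = Φ1·|A1|·Φ1 are cospectral (they have the same characteristic polynomial), and consequently for any signed graph Γ2 on n2 vertices with adjacency matrix A2 and marking μ2, and every real x with x·I_{n2} − A2 invertible, det(x·I − A(Γ1⊛Γ2)) = det(x·I_{n2} − A2)^{n1} · det( (x² − x·χ_{A2}(x))·I_{n1} − A1² ). -/
/-!
Balance of `Γ₁` gives a `±1` diagonal matrix `D = Φ₁·diag ε` with `D² = 1` and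
`A₁μ = D·A₁·D`, so `A₁μ` is similar to `A₁`. For the corona, take the Schur complement of
the block `(x·I − A₂) ⊗ I`: since
`(μ₂ᵀ ⊗ Φ₁)·((x·I − A₂)⁻¹ ⊗ I)·(μ₂ ⊗ Φ₁) = χ_{A₂}(x)·Φ₁² = χ_{A₂}(x)·I`,
what remains is `[[x·I, −A₁μ], [−A₁μ, (x − χ_{A₂}(x))·I]]`. Its diagonal blocks are scalar, so
its determinant is `det(x(x − χ_{A₂}(x))·I − A₁μ²)`, and `A₁μ² = D·A₁²·D`.
-/

open Matrix Kronecker BigOperators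

/-- The block `μ₂ᵀ ⊗ Φ₁`, where `Φ₁ = diag μ₁` and `μ₂` is regarded as an `n₂×1`
column vector: an `n₁ × (n₂·n₁)` matrix. -/
noncomputable def muBlock {n1 n2 : ℕ} (μ1 : Fin n1 → ℝ) (μ2 : Fin n2 → ℝ) :
    Matrix (Fin n1) (Fin n2 × Fin n1) ℝ :=
  Matrix.of fun i jk => μ2 jk.1 * Matrix.diagonal μ1 i jk.2

/-- Adjacency matrix of the duplication add vertex corona `Γ₁ ⊛ Γ₂`, in `3×3` block form
`[[0, A₁μ, 0], [A₁μ, 0, μ₂ᵀ⊗Φ₁], [0, μ₂⊗Φ₁, A₂⊗I]]` (blocks of sizes `n₁, n₁, n₁·n₂`),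
where `A₁μ = Φ₁·|A₁|·Φ₁` is supplied as a parameter. -/
noncomputable def coronaStar {n1 n2 : ℕ} (A1μ : Matrix (Fin n1) (Fin n1) ℝ)
    (A2 : Matrix (Fin n2) (Fin n2) ℝ) (μ1 : Fin n1 → ℝ) (μ2 : Fin n2 → ℝ) :
    Matrix ((Fin n1 ⊕ Fin n1) ⊕ Fin n2 × Fin n1)
      ((Fin n1 ⊕ Fin n1) ⊕ Fin n2 × Fin n1) ℝ :=
  Matrix.fromBlocks
    (Matrix.fromBlocks 0 A1μ A1μ 0)
    (Matrix.fromRows (0 : Matrix (Fin n1) (Fin n2 × Fin n1) ℝ) (muBlock μ1 μ2))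
    (Matrix.fromCols (0 : Matrix (Fin n2 × Fin n1) (Fin n1) ℝ) (muBlock μ1 μ2)ᵀ)
    (A2 ⊗ₖ (1 : Matrix (Fin n1) (Fin n1) ℝ))

/-- The signed `M`-coronal `χ_M(x) = μᵀ·(x·I − M)⁻¹·μ`. -/
noncomputable def coronal {V : Type} [Fintype V] [DecidableEq V]
    (M : Matrix V V ℝ) (μ : V → ℝ) (x : ℝ) : ℝ :=
  μ ⬝ᵥ ((x • (1 : Matrix V V ℝ) - M)⁻¹ *ᵥ μ)

namespace Matrix

variable {n R : Type*} [Fintype n] [DecidableEq n] [CommRing R]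

theorem charpoly_conj_of_mul_self_eq_one {D : Matrix n n R} (hD : D * D = 1)
    (A : Matrix n n R) : (D * A * D).charpoly = A.charpoly := by
  rw [charpoly_mul_comm, ← Matrix.mul_assoc, hD, Matrix.one_mul]

theorem det_conj_of_mul_self_eq_one {D : Matrix n n R} (hD : D * D = 1)
    (A : Matrix n n R) : (D * A * D).det = A.det := by
  rw [det_mul_comm, ← Matrix.mul_assoc, hD, Matrix.one_mul]

theorem diagonal_mul_self_eq_one {σ : n → R} (hσ : ∀ i, σ i * σ i = 1) :
    diagonal σ * diagonal σ = 1 := by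
  rw [diagonal_mul_diagonal, ← diagonal_one]
  exact congrArg diagonal (funext hσ)

theorem diagonal_mul_diagonal_conj (μ ε : n → R) (A : Matrix n n R) :
    diagonal μ * (diagonal ε * A * diagonal ε) * diagonal μ
      = diagonal (μ * ε) * A * diagonal (μ * ε) := by
  calc _ = diagonal μ * diagonal ε * A * (diagonal ε * diagonal μ) := by
        simp only [Matrix.mul_assoc]
    _ = _ := by simp_rw [diagonal_mul_diagonal, mul_comm (ε _) (μ _)]; rfl

theorem smul_one_sub_conj_mul_conj {D : Matrix n n R} (hD : D * D = 1) (c : R)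
    (A : Matrix n n R) :
    c • 1 - D * A * D * (D * A * D) = D * (c • 1 - A ^ 2) * D := by
  have hAA : D * A * D * (D * A * D) = D * A ^ 2 * D := by
    simp only [sq, Matrix.mul_assoc]
    rw [← Matrix.mul_assoc D D, hD, Matrix.one_mul]
  rw [hAA, Matrix.mul_sub, Matrix.sub_mul, Matrix.mul_smul, Matrix.mul_one, Matrix.smul_mul, hD]

theorem det_fromBlocks_smul_one (a d : ℝ) (B C : Matrix n n ℝ) :
    (fromBlocks (a • 1) B C (d • 1)).det = ((a * d) • 1 - B * C).det := by
  -- right-multiplying by `[[d • 1, 0], [-C, 1]]` clears the block `C`, as `C` commutes with `d • 1`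
  have h_of_ne : ∀ d : ℝ, d ≠ 0 →
      (fromBlocks (a • 1) B C (d • 1)).det = ((a * d) • 1 - B * C).det := by
    intro d hd
    have hprod : fromBlocks (a • 1) B C (d • 1) * fromBlocks (d • 1) 0 (-C) 1
        = fromBlocks ((a * d) • 1 - B * C) B 0 (d • (1 : Matrix n n ℝ)) := by
      simp [fromBlocks_multiply, smul_smul, sub_eq_add_neg, mul_comm d a]
    have hdet := congrArg det hprod
    rw [det_mul, det_fromBlocks_zero₁₂, det_fromBlocks_zero₂₁, det_one, mul_one] at hdet
    exact mul_right_cancel₀ (by simp [hd]) hdet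
  have hl : Continuous fun d : ℝ => (fromBlocks (a • 1) B C (d • 1)).det := by fun_prop
  have hr : Continuous fun d : ℝ => ((a * d) • 1 - B * C).det := by fun_prop
  exact congrFun (hl.ext_on (dense_compl_singleton 0) hr h_of_ne) d

end Matrix

section Corona

variable {n1 n2 : ℕ}

theorem muBlock_mul_kronecker_one (μ1 : Fin n1 → ℝ) (v : Fin n2 → ℝ)
    (M : Matrix (Fin n2) (Fin n2) ℝ) :
    muBlock μ1 v * (M ⊗ₖ (1 : Matrix (Fin n1) (Fin n1) ℝ)) = muBlock μ1 (v ᵥ* M) := by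
  ext i ⟨j, k⟩
  simp [muBlock, mul_apply, Fintype.sum_prod_type, vecMul, dotProduct, one_apply, diagonal_apply,
    Finset.sum_mul, mul_right_comm]

theorem muBlock_mul_transpose_muBlock (μ1 : Fin n1 → ℝ) (v w : Fin n2 → ℝ) :
    muBlock μ1 v * (muBlock μ1 w)ᵀ = (v ⬝ᵥ w) • diagonal (fun i => μ1 i * μ1 i) := by
  ext i i'
  simp only [muBlock, diagonal_apply, mul_ite, mul_zero, mul_apply, of_apply, transpose_apply,
    ite_mul, zero_mul, Fintype.sum_prod_type, Finset.sum_ite_eq, Finset.mem_univ, ↓reduceIte,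
    Finset.sum_ite_irrel, Finset.sum_const_zero, dotProduct, Matrix.smul_apply, smul_eq_mul,
    Finset.sum_mul]
  split_ifs with h
  · subst h
    exact Finset.sum_congr rfl fun _ _ => by ring
  · rfl

theorem muBlock_conj_kronecker_one {μ1 : Fin n1 → ℝ} (hμ1 : ∀ i, μ1 i * μ1 i = 1)
    (μ2 : Fin n2 → ℝ) (M : Matrix (Fin n2) (Fin n2) ℝ) :
    muBlock μ1 μ2 * (M ⊗ₖ (1 : Matrix (Fin n1) (Fin n1) ℝ)) * (muBlock μ1 μ2)ᵀ
      = (μ2 ⬝ᵥ M *ᵥ μ2) • 1 := by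
  rw [muBlock_mul_kronecker_one, muBlock_mul_transpose_muBlock, ← dotProduct_mulVec,
    funext hμ1, diagonal_one]

theorem smul_one_sub_coronaStar (N : Matrix (Fin n1) (Fin n1) ℝ)
    (A2 : Matrix (Fin n2) (Fin n2) ℝ) (μ1 : Fin n1 → ℝ) (μ2 : Fin n2 → ℝ) (x : ℝ) :
    x • 1 - coronaStar N A2 μ1 μ2
      = fromBlocks (fromBlocks (x • 1) (-N) (-N) (x • 1))
          (fromRows 0 (-muBlock μ1 μ2)) (fromCols 0 (-(muBlock μ1 μ2)ᵀ))
          ((x • 1 - A2) ⊗ₖ (1 : Matrix (Fin n1) (Fin n1) ℝ)) := by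
  rw [coronaStar, ← fromBlocks_one, ← fromBlocks_one, ← one_kronecker_one, sub_eq_add_neg,
    fromBlocks_smul, fromBlocks_smul, fromBlocks_neg, fromBlocks_neg, fromBlocks_add,
    fromBlocks_add]
  simp only [smul_zero, neg_zero, add_zero, zero_add, fromRows_neg, fromCols_neg, ← sub_eq_add_neg,
    zero_sub, ← smul_kronecker]
  congr 1
  ext ⟨a, b⟩ ⟨c, d⟩
  simp [sub_mul]

theorem det_smul_one_sub_coronaStar (N : Matrix (Fin n1) (Fin n1) ℝ)
    {A2 : Matrix (Fin n2) (Fin n2) ℝ} {μ1 : Fin n1 → ℝ} (hμ1 : ∀ i, μ1 i * μ1 i = 1)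
    (μ2 : Fin n2 → ℝ) {x : ℝ} (hx : IsUnit (x • (1 : Matrix (Fin n2) (Fin n2) ℝ) - A2).det) :
    (x • 1 - coronaStar N A2 μ1 μ2).det
      = (x • (1 : Matrix (Fin n2) (Fin n2) ℝ) - A2).det ^ n1 *
        ((x ^ 2 - x * coronal A2 μ2 x) • 1 - N * N).det := by
  set S := x • (1 : Matrix (Fin n2) (Fin n2) ℝ) - A2
  have hdetK : (S ⊗ₖ (1 : Matrix (Fin n1) (Fin n1) ℝ)).det = S.det ^ n1 := by
    rw [det_kronecker, det_one, one_pow, mul_one, Fintype.card_fin]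
  have : Invertible (S ⊗ₖ (1 : Matrix (Fin n1) (Fin n1) ℝ)) :=
    invertibleOfIsUnitDet _ (hdetK ▸ hx.pow n1)
  have hschur : fromRows (0 : Matrix (Fin n1) _ ℝ) (-muBlock μ1 μ2)
      * ⅟(S ⊗ₖ (1 : Matrix (Fin n1) (Fin n1) ℝ))
      * fromCols (0 : Matrix _ (Fin n1) ℝ) (-(muBlock μ1 μ2)ᵀ)
      = fromBlocks 0 0 0 (coronal A2 μ2 x • 1) := by
    rw [invOf_eq_nonsing_inv, inv_kronecker, inv_one, fromRows_mul, fromRows_mul_fromCols]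
    simp only [Matrix.zero_mul, Matrix.mul_zero, Matrix.neg_mul, Matrix.mul_neg, neg_neg, neg_zero,
      muBlock_conj_kronecker_one hμ1]
    rfl
  rw [smul_one_sub_coronaStar, det_fromBlocks₂₂, hdetK, hschur, sub_eq_add_neg, fromBlocks_neg,
    fromBlocks_add]
  simp only [neg_zero, add_zero, ← sub_eq_add_neg, ← sub_smul]
  rw [det_fromBlocks_smul_one, neg_mul_neg, mul_sub, sq]

end Corona

theorem corona_adjacency_charpoly_balanced_general (n1 n2 : ℕ)
    (A1 : Matrix (Fin n1) (Fin n1) ℝ)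
    (μ1 : Fin n1 → ℝ) (hμ1 : ∀ i, μ1 i = 1 ∨ μ1 i = -1)
    (hbal1 : ∃ ε : Fin n1 → ℝ, (∀ i, ε i = 1 ∨ ε i = -1) ∧
      Matrix.diagonal ε * A1 * Matrix.diagonal ε = A1.map abs) :
    A1.charpoly = (Matrix.diagonal μ1 * A1.map abs * Matrix.diagonal μ1).charpoly ∧
    ∀ (A2 : Matrix (Fin n2) (Fin n2) ℝ), A2.IsSymm → (∀ i, A2 i i = 0) →
      (∀ i j, A2 i j = 1 ∨ A2 i j = 0 ∨ A2 i j = -1) →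
      ∀ (μ2 : Fin n2 → ℝ), (∀ i, μ2 i = 1 ∨ μ2 i = -1) →
      ∀ x : ℝ, IsUnit (x • (1 : Matrix (Fin n2) (Fin n2) ℝ) - A2).det →
      (x • 1 -
          coronaStar (Matrix.diagonal μ1 * A1.map abs * Matrix.diagonal μ1) A2 μ1 μ2).det
        = (x • (1 : Matrix (Fin n2) (Fin n2) ℝ) - A2).det ^ n1 *
          ((x ^ 2 - x * coronal A2 μ2 x) • (1 : Matrix (Fin n1) (Fin n1) ℝ)
            - A1 ^ 2).det := by
  obtain ⟨ε, hε, hbal⟩ := hbal1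
  have hμ1sq : ∀ i, μ1 i * μ1 i = 1 := fun i => mul_self_eq_one_iff.mpr (hμ1 i)
  set D := diagonal (μ1 * ε)
  have hD : D * D = 1 := diagonal_mul_self_eq_one fun i => by
    rw [Pi.mul_apply, mul_mul_mul_comm, hμ1sq, mul_self_eq_one_iff.mpr (hε i), one_mul]
  have hswitch : diagonal μ1 * A1.map abs * diagonal μ1 = D * A1 * D := by
    rw [← hbal, diagonal_mul_diagonal_conj]
  refine ⟨by rw [hswitch, charpoly_conj_of_mul_self_eq_one hD], fun A2 _ _ _ μ2 _ x hx => ?_⟩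
  rw [det_smul_one_sub_coronaStar _ hμ1sq μ2 hx, hswitch, smul_one_sub_conj_mul_conj hD,
    det_conj_of_mul_self_eq_one hD]

/-- If `Γ₁` is balanced then `A₁` and `A₁μ = Φ₁·|A₁|·Φ₁` are cospectral, and
consequently for any signed graph `Γ₂` and every real `x` with `x·I − A₂` invertible,
`det(x·I − A(Γ₁⊛Γ₂)) = det(x·I − A₂)^{n₁} · det((x² − x·χ_{A₂}(x))·I_{n₁} − A₁²)`. -/
theorem corona_adjacency_charpoly_balanced (n1 n2 : ℕ)
    (A1 : Matrix (Fin n1) (Fin n1) ℝ) (hA1sym : A1.IsSymm) (hA1diag : ∀ i, A1 i i = 0)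
    (hA1ent : ∀ i j, A1 i j = 1 ∨ A1 i j = 0 ∨ A1 i j = -1)
    (μ1 : Fin n1 → ℝ) (hμ1 : ∀ i, μ1 i = 1 ∨ μ1 i = -1)
    (hbal1 : ∃ ε : Fin n1 → ℝ, (∀ i, ε i = 1 ∨ ε i = -1) ∧
      Matrix.diagonal ε * A1 * Matrix.diagonal ε = A1.map abs) :
    A1.charpoly = (Matrix.diagonal μ1 * A1.map abs * Matrix.diagonal μ1).charpoly ∧
    ∀ (A2 : Matrix (Fin n2) (Fin n2) ℝ), A2.IsSymm → (∀ i, A2 i i = 0) →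
      (∀ i j, A2 i j = 1 ∨ A2 i j = 0 ∨ A2 i j = -1) →
      ∀ (μ2 : Fin n2 → ℝ), (∀ i, μ2 i = 1 ∨ μ2 i = -1) →
      ∀ x : ℝ, IsUnit (x • (1 : Matrix (Fin n2) (Fin n2) ℝ) - A2).det →
      (x • 1 -
          coronaStar (Matrix.diagonal μ1 * A1.map abs * Matrix.diagonal μ1) A2 μ1 μ2).det
        = (x • (1 : Matrix (Fin n2) (Fin n2) ℝ) - A2).det ^ n1 *
          ((x ^ 2 - x * coronal A2 μ2 x) • (1 : Matrix (Fin n1) (Fin n1) ℝ)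
            - A1 ^ 2).det :=
  corona_adjacency_charpoly_balanced_general n1 n2 A1 μ1 hμ1 hbal1
end

section
/- Let Γ be an r-regular signed graph (with marking), and let Γ1 and Γ2 be signed graphs of the same order n with markings μ1, μ2 such that L(Γ1) and L(Γ2) have the same characteristic polynomial and the signed Laplacian coronals agree, χ_{L(Γ1)}(x) = χ_{L(Γ2)}(x) for every real x at which both are defined. Then the Laplacian matrices L(Γ⊛Γ1) and L(Γ⊛Γ2) have the same characteristic polynomial, i.e., Γ⊛Γ1 and Γ⊛Γ2 are Laplacian cospectral. -/
open Matrix Kronecker BigOperators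

/-- The degree matrix of a signed graph: the diagonal matrix of the row sums of the
entrywise absolute value of its adjacency matrix. -/
noncomputable def degMat {V : Type} [Fintype V] [DecidableEq V] (M : Matrix V V ℝ) :
    Matrix V V ℝ :=
  Matrix.diagonal fun i => ∑ j, |M i j|

theorem Polynomial.eq_of_eval_eq_of_eval_ne_zero {R : Type*} [CommRing R] [IsDomain R]
    [Infinite R] {p q r : Polynomial R} (hr : r ≠ 0)
    (h : ∀ x, r.eval x ≠ 0 → p.eval x = q.eval x) : p = q :=
  Polynomial.eq_of_infinite_eval_eq p q
    ((Polynomial.finite_setOfPred_isRoot hr).infinite_compl.mono h)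

theorem Matrix.eval_charpoly_eq_det_smul_one_sub {R n : Type*} [CommRing R] [Fintype n]
    [DecidableEq n] (M : Matrix n n R) (x : R) :
    M.charpoly.eval x = (x • (1 : Matrix n n R) - M).det := by
  rw [eval_charpoly, scalar_apply, smul_one_eq_diagonal]

section Corona

variable {n1 n2 : ℕ} {μ1 : Fin n1 → ℝ} {μ2 : Fin n2 → ℝ}

theorem abs_muBlock_apply (hμ1 : ∀ i, |μ1 i| = 1) (hμ2 : ∀ j, |μ2 j| = 1) (i : Fin n1)
    (jk : Fin n2 × Fin n1) : |muBlock μ1 μ2 i jk| = if i = jk.2 then 1 else 0 := by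
  split_ifs with h <;> simp [muBlock, diagonal_apply, h, abs_mul, hμ1, hμ2]

theorem sum_abs_muBlock_row (hμ1 : ∀ i, |μ1 i| = 1) (hμ2 : ∀ j, |μ2 j| = 1) (i : Fin n1) :
    ∑ jk, |muBlock μ1 μ2 i jk| = n2 := by
  rw [Fintype.sum_prod_type]
  simp [abs_muBlock_apply hμ1 hμ2]

theorem sum_abs_muBlock_col (hμ1 : ∀ i, |μ1 i| = 1) (hμ2 : ∀ j, |μ2 j| = 1)
    (jk : Fin n2 × Fin n1) : ∑ i, |muBlock μ1 μ2 i jk| = 1 := by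
  simp [abs_muBlock_apply hμ1 hμ2]

variable (A1μ : Matrix (Fin n1) (Fin n1) ℝ) (A2 : Matrix (Fin n2) (Fin n2) ℝ)

theorem degMat_coronaStar (hμ1 : ∀ i, |μ1 i| = 1) (hμ2 : ∀ j, |μ2 j| = 1) :
    degMat (coronaStar A1μ A2 μ1 μ2) =
      fromBlocks (fromBlocks (degMat A1μ) 0 0 (degMat A1μ + (n2 : ℝ) • 1)) 0 0
        ((degMat A2 + 1) ⊗ₖ (1 : Matrix (Fin n1) (Fin n1) ℝ)) := by
  have hrows : (fun v => ∑ w, |coronaStar A1μ A2 μ1 μ2 v w|) =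
      Sum.elim (Sum.elim (fun i => ∑ j, |A1μ i j|) (fun i => ∑ j, |A1μ i j| + n2))
        (fun jk => ∑ j, |A2 jk.1 j| + 1) := by
    funext v
    rcases v with (i | i) | jk <;>
      simp [coronaStar, Fintype.sum_sum_type, sum_abs_muBlock_row hμ1 hμ2,
        sum_abs_muBlock_col hμ1 hμ2, Fintype.sum_prod_type, one_apply, apply_ite, add_comm]
  rw [degMat, hrows, ← fromBlocks_diagonal, ← fromBlocks_diagonal, degMat, degMat, smul_one_eq_diagonal, diagonal_add, ← diagonal_one, diagonal_add,
    ← diagonal_one, diagonal_kronecker_diagonal]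
  simp only [mul_one]

theorem smul_one_sub_laplacian_coronaStar (hμ1 : ∀ i, |μ1 i| = 1) (hμ2 : ∀ j, |μ2 j| = 1)
    (x : ℝ) :
    x • 1 - (degMat (coronaStar A1μ A2 μ1 μ2) - coronaStar A1μ A2 μ1 μ2) =
      fromBlocks (fromBlocks (x • 1 - degMat A1μ) A1μ A1μ ((x - n2) • 1 - degMat A1μ))
        (fromRows 0 (muBlock μ1 μ2)) (fromCols 0 (muBlock μ1 μ2)ᵀ)
        (((x - 1) • 1 - (degMat A2 - A2)) ⊗ₖ (1 : Matrix (Fin n1) (Fin n1) ℝ)) := by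
  rw [degMat_coronaStar A1μ A2 hμ1 hμ2, coronaStar]
  ext ((i | i) | ⟨j, k⟩) ((i' | i') | ⟨j', k'⟩) <;>
    simp only [fromBlocks_apply₁₁, fromBlocks_apply₁₂, fromBlocks_apply₂₁, fromBlocks_apply₂₂,
      fromRows_apply_inl, fromRows_apply_inr, fromCols_apply_inl, fromCols_apply_inr,
      Matrix.sub_apply, Matrix.add_apply, Matrix.smul_apply, kroneckerMap_apply, degMat,
      diagonal_apply, one_apply, smul_eq_mul, Sum.inl.injEq, Sum.inr.injEq, Prod.mk.injEq,
      reduceCtorEq] <;>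
    split_ifs <;> simp_all <;> ring

theorem muBlock_mul_kronecker_one_mul_transpose (hμ1 : ∀ i, |μ1 i| = 1)
    (K : Matrix (Fin n2) (Fin n2) ℝ) :
    muBlock μ1 μ2 * (K ⊗ₖ (1 : Matrix (Fin n1) (Fin n1) ℝ)) * (muBlock μ1 μ2)ᵀ
      = (μ2 ⬝ᵥ (K *ᵥ μ2)) • (1 : Matrix (Fin n1) (Fin n1) ℝ) := by
  ext i i'
  simp only [mul_apply, Fintype.sum_prod_type, muBlock, of_apply, transpose_apply,
    kroneckerMap_apply, diagonal_apply, one_apply, Matrix.smul_apply, dotProduct, mulVec,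
    smul_eq_mul, mul_ite, ite_mul, mul_zero, zero_mul, mul_one, Finset.sum_ite_eq,
    Finset.sum_ite_eq', Finset.mem_univ, if_true]
  split_ifs with h
  · subst h
    have hsq : μ1 i * μ1 i = 1 := by rw [← abs_mul_abs_self, hμ1, one_mul]
    simp only [Finset.sum_mul, Finset.mul_sum]
    rw [Finset.sum_comm]
    refine Finset.sum_congr rfl fun a _ => Finset.sum_congr rfl fun b _ => ?_
    linear_combination μ2 a * K a b * μ2 b * hsq
  · simp

theorem det_smul_one_sub_laplacian_coronaStar (hμ1 : ∀ i, |μ1 i| = 1) (hμ2 : ∀ j, |μ2 j| = 1)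
    (x : ℝ) (hx : IsUnit ((x - 1) • (1 : Matrix (Fin n2) (Fin n2) ℝ) - (degMat A2 - A2)).det) :
    (x • 1 - (degMat (coronaStar A1μ A2 μ1 μ2) - coronaStar A1μ A2 μ1 μ2)).det =
      ((x - 1) • (1 : Matrix (Fin n2) (Fin n2) ℝ) - (degMat A2 - A2)).det ^ n1 *
        (fromBlocks (x • 1 - degMat A1μ) A1μ A1μ
          ((x - n2 - coronal (degMat A2 - A2) μ2 (x - 1)) • 1 - degMat A1μ)).det := by
  set N := (x - 1) • (1 : Matrix (Fin n2) (Fin n2) ℝ) - (degMat A2 - A2)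
  have hdetN : (N ⊗ₖ (1 : Matrix (Fin n1) (Fin n1) ℝ)).det = N.det ^ n1 := by
    simp [det_kronecker]
  have := (N ⊗ₖ (1 : Matrix (Fin n1) (Fin n1) ℝ)).invertibleOfIsUnitDet (hdetN ▸ hx.pow n1)
  rw [smul_one_sub_laplacian_coronaStar A1μ A2 hμ1 hμ2, det_fromBlocks₂₂, invOf_eq_nonsing_inv,
    inv_kronecker, inv_one, hdetN, fromRows_mul, fromRows_mul_fromCols, Matrix.zero_mul,
    Matrix.zero_mul, Matrix.zero_mul, Matrix.mul_zero,
    muBlock_mul_kronecker_one_mul_transpose hμ1]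
  congr 2
  rw [sub_eq_add_neg, fromBlocks_neg, fromBlocks_add]
  simp only [neg_zero, add_zero]
  congr 1
  rw [coronal, sub_smul (x - n2)]
  abel

end Corona

theorem corona_L_cospectral_right_general (n : ℕ)
    (A1 : Matrix (Fin n) (Fin n) ℝ)
    (μ1 : Fin n → ℝ) (hμ1 : ∀ i, μ1 i = 1 ∨ μ1 i = -1)
    (A2 : Matrix (Fin n) (Fin n) ℝ)
    (μ2 : Fin n → ℝ) (hμ2 : ∀ i, μ2 i = 1 ∨ μ2 i = -1)
    (hcospec : (degMat A1 - A1).charpoly = (degMat A2 - A2).charpoly)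
    (hcoronal : ∀ x : ℝ,
      IsUnit (x • (1 : Matrix (Fin n) (Fin n) ℝ) - (degMat A1 - A1)).det →
      IsUnit (x • (1 : Matrix (Fin n) (Fin n) ℝ) - (degMat A2 - A2)).det →
      coronal (degMat A1 - A1) μ1 x = coronal (degMat A2 - A2) μ2 x)
    (m : ℕ) (B : Matrix (Fin m) (Fin m) ℝ)
    (ν : Fin m → ℝ) (hν : ∀ i, ν i = 1 ∨ ν i = -1) :
    (degMat (coronaStar (Matrix.diagonal ν * B.map abs * Matrix.diagonal ν) A1 ν μ1)
        - coronaStar (Matrix.diagonal ν * B.map abs * Matrix.diagonal ν) A1 ν μ1).charpoly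
      = (degMat (coronaStar (Matrix.diagonal ν * B.map abs * Matrix.diagonal ν) A2 ν μ2)
        - coronaStar (Matrix.diagonal ν * B.map abs * Matrix.diagonal ν) A2 ν μ2).charpoly := by
  have habs {k : ℕ} {σ : Fin k → ℝ} (hσ : ∀ i, σ i = 1 ∨ σ i = -1) (i : Fin k) : |σ i| = 1 :=
    (abs_eq zero_le_one).mpr (hσ i)
  refine Polynomial.eq_of_eval_eq_of_eval_ne_zero
    (((degMat A1 - A1).charpoly_monic.comp_X_sub_C 1).ne_zero) fun x hx => ?_
  have h1 : IsUnit ((x - 1) • (1 : Matrix (Fin n) (Fin n) ℝ) - (degMat A1 - A1)).det := by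
    simpa [eval_charpoly_eq_det_smul_one_sub] using hx
  have h2 : IsUnit ((x - 1) • (1 : Matrix (Fin n) (Fin n) ℝ) - (degMat A2 - A2)).det := by
    simpa [hcospec, eval_charpoly_eq_det_smul_one_sub] using hx
  rw [eval_charpoly_eq_det_smul_one_sub, eval_charpoly_eq_det_smul_one_sub,
    det_smul_one_sub_laplacian_coronaStar _ _ (habs hν) (habs hμ1) x h1,
    det_smul_one_sub_laplacian_coronaStar _ _ (habs hν) (habs hμ2) x h2,
    hcoronal (x - 1) h1 h2, ← eval_charpoly_eq_det_smul_one_sub, hcospec,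
    eval_charpoly_eq_det_smul_one_sub]

/-- If `Γ` is `r`-regular, and `Γ₁, Γ₂` (of the same order `n`) are Laplacian
cospectral with equal signed Laplacian coronals wherever both are defined, then `Γ⊛Γ₁` and
`Γ⊛Γ₂` are Laplacian cospectral. -/
theorem corona_L_cospectral_right (n : ℕ)
    (A1 : Matrix (Fin n) (Fin n) ℝ) (hA1sym : A1.IsSymm) (hA1diag : ∀ i, A1 i i = 0)
    (hA1ent : ∀ i j, A1 i j = 1 ∨ A1 i j = 0 ∨ A1 i j = -1)
    (μ1 : Fin n → ℝ) (hμ1 : ∀ i, μ1 i = 1 ∨ μ1 i = -1)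
    (A2 : Matrix (Fin n) (Fin n) ℝ) (hA2sym : A2.IsSymm) (hA2diag : ∀ i, A2 i i = 0)
    (hA2ent : ∀ i j, A2 i j = 1 ∨ A2 i j = 0 ∨ A2 i j = -1)
    (μ2 : Fin n → ℝ) (hμ2 : ∀ i, μ2 i = 1 ∨ μ2 i = -1)
    (hcospec : (degMat A1 - A1).charpoly = (degMat A2 - A2).charpoly)
    (hcoronal : ∀ x : ℝ,
      IsUnit (x • (1 : Matrix (Fin n) (Fin n) ℝ) - (degMat A1 - A1)).det →
      IsUnit (x • (1 : Matrix (Fin n) (Fin n) ℝ) - (degMat A2 - A2)).det →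
      coronal (degMat A1 - A1) μ1 x = coronal (degMat A2 - A2) μ2 x)
    (m : ℕ) (r : ℝ) (B : Matrix (Fin m) (Fin m) ℝ) (hBsym : B.IsSymm)
    (hBdiag : ∀ i, B i i = 0)
    (hBent : ∀ i j, B i j = 1 ∨ B i j = 0 ∨ B i j = -1)
    (ν : Fin m → ℝ) (hν : ∀ i, ν i = 1 ∨ ν i = -1)
    (hregB : ∀ i, ∑ j, |B i j| = r) :
    (degMat (coronaStar (Matrix.diagonal ν * B.map abs * Matrix.diagonal ν) A1 ν μ1)
        - coronaStar (Matrix.diagonal ν * B.map abs * Matrix.diagonal ν) A1 ν μ1).charpoly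
      = (degMat (coronaStar (Matrix.diagonal ν * B.map abs * Matrix.diagonal ν) A2 ν μ2)
        - coronaStar (Matrix.diagonal ν * B.map abs * Matrix.diagonal ν) A2 ν μ2).charpoly :=
  corona_L_cospectral_right_general n A1 μ1 hμ1 A2 μ2 hμ2 hcospec hcoronal m B ν hν
end
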